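/- Let H : ℝ → Matrix (Fin 3) (Fin 3) ℝ take values in skew-symmetric matrices, with ‖H(t)v‖ ≤ c₁‖v‖ for all t and v. If m solves m'(t) = -ε H(t) m(t), m(0) = M, and m₁ solves m₁'(t) = -H₀(t) m₀ with m₁(0) = 0 where m₀ ≡ M and H₀(t) := H evaluated at the frozen slow time (so that ‖H(t) - H₀(t)‖ ≤ c₂ ε t), then the remainder e(t) := m(t) - M - ε m₁(t) satisfies ‖e(t)‖ ≤ C ε² (1 + t²) ‖M‖ for all t ≥ 0, with C depending only on c₁, c₂. -/

import Mathlib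

open Matrix

noncomputable def mv3 (A : Matrix (Fin 3) (Fin 3) ℝ) (v : EuclideanSpace ℝ (Fin 3)) :
    EuclideanSpace ℝ (Fin 3) := WithLp.toLp 2 (A.mulVec v)

lemma mv3_add (A : Matrix (Fin 3) (Fin 3) ℝ) (x y : EuclideanSpace ℝ (Fin 3)) :
    mv3 A (x + y) = mv3 A x + mv3 A y := by simp [mv3, Matrix.mulVec_add]

lemma mv3_smul (A : Matrix (Fin 3) (Fin 3) ℝ) (c : ℝ) (x : EuclideanSpace ℝ (Fin 3)) :
    mv3 A (c • x) = c • mv3 A x := by simp [mv3, Matrix.mulVec_smul]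

lemma mv3_sub_mat (A B : Matrix (Fin 3) (Fin 3) ℝ) (x : EuclideanSpace ℝ (Fin 3)) :
    mv3 (A - B) x = mv3 A x - mv3 B x := by simp [mv3, Matrix.sub_mulVec]

lemma skew_inner (A : Matrix (Fin 3) (Fin 3) ℝ) (hA : Aᵀ = -A) (v : EuclideanSpace ℝ (Fin 3)) :
    inner ℝ (mv3 A v) v = (0 : ℝ) := by
  have h1 : (inner ℝ (mv3 A v) v : ℝ) = dotProduct (A.mulVec v) v := by
    simp [mv3, PiLp.inner_apply, dotProduct, RCLike.inner_apply, mul_comm]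
  have h2 : dotProduct (A.mulVec v) v = dotProduct (Aᵀ.mulVec v) v := by
    rw [dotProduct_comm, Matrix.dotProduct_mulVec, Matrix.mulVec_transpose]
  rw [h1]
  have := h2
  rw [hA, Matrix.neg_mulVec, neg_dotProduct] at this
  linarith

set_option maxHeartbeats 1000000 in
/-- Tail estimate for the asymptotic expansion of the rescaled micro problem:
`‖m(t) - M - ε m₁(t)‖ ≤ C ε² (1 + t²) ‖M‖`, `C` depending only on `c₁, c₂`. -/
theorem tail_estimate (c₁ c₂ : ℝ) :
    ∃ C : ℝ, 0 ≤ C ∧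
      ∀ (H H₀ : ℝ → Matrix (Fin 3) (Fin 3) ℝ)
        (m m₁ : ℝ → EuclideanSpace ℝ (Fin 3))
        (M : EuclideanSpace ℝ (Fin 3)) (ε : ℝ),
        0 < ε →
        (∀ t : ℝ, (H t)ᵀ = -(H t)) →
        (∀ (t : ℝ) (v : EuclideanSpace ℝ (Fin 3)), ‖mv3 (H t) v‖ ≤ c₁ * ‖v‖) →
        (∀ (t : ℝ) (v : EuclideanSpace ℝ (Fin 3)), 0 ≤ t →
          ‖mv3 (H t - H₀ t) v‖ ≤ c₂ * ε * t * ‖v‖) →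
        (∀ t : ℝ, HasDerivAt m (-(ε • mv3 (H t) (m t))) t) →
        m 0 = M →
        (∀ t : ℝ, HasDerivAt m₁ (-(mv3 (H₀ t) M)) t) →
        m₁ 0 = 0 →
        ∀ t : ℝ, 0 ≤ t →
          ‖m t - M - ε • m₁ t‖ ≤ C * ε ^ 2 * (1 + t ^ 2) * ‖M‖ := by
  refine ⟨2 + |c₁| + |c₂| + c₁ ^ 2 + |c₁| * |c₂|, by positivity, ?_⟩
  intro H H₀ m m₁ M ε hε hskew hb hσ hm hm0 hm1 hm10 t ht
  -- nonnegativity of the constants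
  have hone : ‖(EuclideanSpace.single (0 : Fin 3) (1 : ℝ))‖ = 1 := by
    simp [EuclideanSpace.norm_single]
  have hc₁ : 0 ≤ c₁ := by
    have h := hb 0 (EuclideanSpace.single (0 : Fin 3) (1 : ℝ))
    rw [hone, mul_one] at h
    exact le_trans (norm_nonneg _) h
  have hc₂ : 0 ≤ c₂ := by
    have h := hσ 1 (EuclideanSpace.single (0 : Fin 3) (1 : ℝ)) zero_le_one
    rw [hone] at h
    nlinarith [norm_nonneg (mv3 (H 1 - H₀ 1) (EuclideanSpace.single (0 : Fin 3) (1 : ℝ)))]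
  rw [abs_of_nonneg hc₁, abs_of_nonneg hc₂]
  -- bound on m₁
  have hm1bound : ∀ s : ℝ, 0 ≤ s → ‖m₁ s‖ ≤ (c₁ * s + c₂ * ε * s ^ 2) * ‖M‖ := by
    intro s hs
    have key := norm_image_sub_le_of_norm_deriv_le_segment'
      (f := m₁) (f' := fun u => -(mv3 (H₀ u) M)) (a := 0) (b := s)
      (C := (c₁ + c₂ * ε * s) * ‖M‖)
      (fun u _ => (hm1 u).hasDerivWithinAt) ?_ s (Set.right_mem_Icc.2 hs)
    · rw [hm10, sub_zero, sub_zero] at key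
      nlinarith [key]
    · intro u hu
      have h0 : mv3 (H₀ u) M = mv3 (H u) M - mv3 (H u - H₀ u) M := by
        rw [mv3_sub_mat]; abel
      rw [norm_neg, h0]
      have := norm_sub_le (mv3 (H u) M) (mv3 (H u - H₀ u) M)
      have hb1 := hb u M
      have hb2 := hσ u M hu.1
      nlinarith [norm_nonneg M, hu.1, le_of_lt hu.2, mul_nonneg (mul_nonneg hc₂ hε.le) (norm_nonneg M)]
  -- norm conservation for m
  have hmconst : ∀ s : ℝ, ‖m s‖ = ‖M‖ := by
    have hd : ∀ s : ℝ, HasDerivAt (fun u => (inner ℝ (m u) (m u) : ℝ)) 0 s := by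
      intro s
      have h := HasDerivAt.inner ℝ (hm s) (hm s)
      have hz := skew_inner (H s) (hskew s) (m s)
      have h1 : (inner ℝ (m s) (-(ε • mv3 (H s) (m s))) : ℝ) = 0 := by
        rw [inner_neg_right, real_inner_smul_right, real_inner_comm, hz]; ring
      have h2 : (inner ℝ (-(ε • mv3 (H s) (m s))) (m s) : ℝ) = 0 := by
        rw [inner_neg_left, real_inner_smul_left, hz]; ring
      rwa [h1, h2, add_zero] at h
    intro s
    have hconst := is_const_of_deriv_eq_zero (f := fun u => (inner ℝ (m u) (m u) : ℝ))
      (fun u => (hd u).differentiableAt) (fun u => (hd u).deriv) s 0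
    simp only [hm0] at hconst
    have hsq : ‖m s‖ ^ 2 = ‖M‖ ^ 2 := by
      rw [← real_inner_self_eq_norm_sq, ← real_inner_self_eq_norm_sq]; exact hconst
    have := congrArg Real.sqrt hsq
    rwa [Real.sqrt_sq (norm_nonneg _), Real.sqrt_sq (norm_nonneg _)] at this
  -- the error function
  set e : ℝ → EuclideanSpace ℝ (Fin 3) := fun s => m s - M - ε • m₁ s with he_def
  set e' : ℝ → EuclideanSpace ℝ (Fin 3) :=
    fun s => -(ε • mv3 (H s) (m s)) - ε • (-(mv3 (H₀ s) M)) with he'_def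
  have he : ∀ s : ℝ, HasDerivAt e (e' s) s :=
    fun s => ((hm s).sub_const M).sub ((hm1 s).const_smul ε)
  set F : ℝ → EuclideanSpace ℝ (Fin 3) :=
    fun s => -(ε • mv3 (H s - H₀ s) M) - (ε ^ 2) • mv3 (H s) (m₁ s) with hF_def
  have hid : ∀ s : ℝ, e' s = -(ε • mv3 (H s) (e s)) + F s := by
    intro s
    have hms : m s = e s + M + ε • m₁ s := by simp [he_def]; abel
    rw [he'_def, hF_def]
    simp only
    rw [hms, mv3_add, mv3_add, mv3_smul, mv3_sub_mat]
    module
  have hinner : ∀ s : ℝ, (inner ℝ (e' s) (e s) : ℝ) = inner ℝ (F s) (e s) := by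
    intro s
    rw [hid s, inner_add_left, inner_neg_left, real_inner_smul_left,
      skew_inner (H s) (hskew s) (e s)]
    ring
  have he0 : e 0 = 0 := by simp [he_def, hm0, hm10]
  -- the driving bound
  set g : ℝ := ε ^ 2 * (c₂ * t + c₁ * (c₁ * t + c₂ * ε * t ^ 2)) * ‖M‖ with hg_def
  have hgnn : 0 ≤ g := by
    have : 0 ≤ c₂ * t + c₁ * (c₁ * t + c₂ * ε * t ^ 2) := by positivity
    positivity
  have hFbound : ∀ s : ℝ, s ∈ Set.Icc 0 t → ‖F s‖ ≤ g := by
    intro s hs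
    have h1 : ‖F s‖ ≤ ε * ‖mv3 (H s - H₀ s) M‖ + ε ^ 2 * ‖mv3 (H s) (m₁ s)‖ := by
      calc ‖F s‖ ≤ ‖ε • mv3 (H s - H₀ s) M‖ + ‖(ε ^ 2) • mv3 (H s) (m₁ s)‖ :=
            (norm_sub_le _ _).trans (le_of_eq (by rw [norm_neg]))
      _ = ε * ‖mv3 (H s - H₀ s) M‖ + ε ^ 2 * ‖mv3 (H s) (m₁ s)‖ := by
            rw [norm_smul, norm_smul, Real.norm_eq_abs, Real.norm_eq_abs,
              abs_of_pos hε, abs_of_nonneg (sq_nonneg ε)]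
    have h2 := hσ s M hs.1
    have h3 := hb s (m₁ s)
    have h4 := hm1bound s hs.1
    have hst : s ≤ t := hs.2
    have h5 : ‖F s‖ ≤ ε * (c₂ * ε * s * ‖M‖) + ε ^ 2 * (c₁ * ((c₁ * s + c₂ * ε * s ^ 2) * ‖M‖)) := by
      refine h1.trans ?_
      exact add_le_add (mul_le_mul_of_nonneg_left h2 hε.le)
        (mul_le_mul_of_nonneg_left (h3.trans (mul_le_mul_of_nonneg_left h4 hc₁)) (sq_nonneg ε))
    refine h5.trans ?_
    rw [hg_def]
    nlinarith [mul_nonneg (mul_nonneg (mul_nonneg (sq_nonneg ε) hc₂) (norm_nonneg M)) (sub_nonneg.2 hst),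
      mul_nonneg (mul_nonneg (mul_nonneg (mul_nonneg (sq_nonneg ε) hc₁) hc₁) (norm_nonneg M)) (sub_nonneg.2 hst),
      mul_nonneg (mul_nonneg (mul_nonneg (mul_nonneg (mul_nonneg (sq_nonneg ε) hε.le) hc₁) hc₂) (norm_nonneg M)) (sub_nonneg.2 (pow_le_pow_left₀ hs.1 hst 2))]
  -- Gronwall-type step via regularized norm
  have key : ∀ δ : ℝ, 0 < δ → ‖e t‖ ≤ g * t + δ := by
    intro δ hδ
    set y : ℝ → ℝ := fun s => (inner ℝ (e s) (e s) : ℝ) + δ ^ 2 with hy_def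
    have hypos : ∀ s, 0 < y s :=
      fun s => add_pos_of_nonneg_of_pos real_inner_self_nonneg (by positivity)
    have hesqrt : ∀ s, ‖e s‖ ≤ Real.sqrt (y s) := by
      intro s
      have h1 : ‖e s‖ = Real.sqrt ((inner ℝ (e s) (e s) : ℝ)) := by
        rw [real_inner_self_eq_norm_sq, Real.sqrt_sq (norm_nonneg _)]
      rw [h1]
      exact Real.sqrt_le_sqrt (le_add_of_nonneg_right (sq_nonneg δ))
    have hder : ∀ s : ℝ, HasDerivAt (fun u => Real.sqrt (y u))
        (((inner ℝ (e s) (e' s) : ℝ) + (inner ℝ (e' s) (e s) : ℝ)) / (2 * Real.sqrt (y s))) s := by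
      intro s
      exact HasDerivAt.sqrt ((HasDerivAt.inner ℝ (he s) (he s)).add_const (δ ^ 2))
        (ne_of_gt (hypos s))
    have hbound : ∀ s ∈ Set.Ico (0 : ℝ) t,
        ‖((inner ℝ (e s) (e' s) : ℝ) + (inner ℝ (e' s) (e s) : ℝ)) / (2 * Real.sqrt (y s))‖ ≤ g := by
      intro s hs
      have hsy : 0 < Real.sqrt (y s) := Real.sqrt_pos.2 (hypos s)
      have hnum : (inner ℝ (e s) (e' s) : ℝ) + (inner ℝ (e' s) (e s) : ℝ)
          = 2 * (inner ℝ (F s) (e s) : ℝ) := by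
        have c := real_inner_comm (e' s) (e s)
        linarith [hinner s, c]
      rw [Real.norm_eq_abs, hnum]
      rw [abs_div, abs_of_pos (by positivity : (0:ℝ) < 2 * Real.sqrt (y s))]
      rw [div_le_iff₀ (by positivity)]
      have habs : |2 * (inner ℝ (F s) (e s) : ℝ)| ≤ 2 * (‖F s‖ * ‖e s‖) := by
        rw [abs_mul, abs_two]
        exact mul_le_mul_of_nonneg_left (abs_real_inner_le_norm _ _) (by norm_num)
      have hF := hFbound s ⟨hs.1, le_of_lt hs.2⟩
      have he' := hesqrt s
      nlinarith [norm_nonneg (F s), norm_nonneg (e s), hsy.le]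
    have mvt := norm_image_sub_le_of_norm_deriv_le_segment'
      (f := fun u => Real.sqrt (y u))
      (f' := fun s => ((inner ℝ (e s) (e' s) : ℝ) + (inner ℝ (e' s) (e s) : ℝ)) / (2 * Real.sqrt (y s)))
      (a := 0) (b := t) (C := g)
      (fun s _ => (hder s).hasDerivWithinAt) hbound t (Set.right_mem_Icc.2 ht)
    have hy0 : Real.sqrt (y 0) = δ := by
      rw [hy_def]; simp [he0]
      exact Real.sqrt_sq hδ.le
    have mvt' : |Real.sqrt (y t) - Real.sqrt (y 0)| ≤ g * (t - 0) := by
      simpa using mvt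
    rw [hy0, sub_zero] at mvt'
    have h8 := (abs_le.1 mvt').2
    have h9 := hesqrt t
    linarith
  have hEt : ‖e t‖ ≤ g * t := by
    refine le_of_forall_pos_le_add ?_
    intro δ hδ
    exact key δ hδ
  -- final arithmetic, split on ε * t
  rcases le_or_gt (ε * t) 1 with hεt | hεt
  · refine le_trans hEt ?_
    rw [hg_def]
    have h1 : c₁ * c₂ * (ε * t) ≤ c₁ * c₂ :=
      by nlinarith [mul_nonneg (mul_nonneg hc₁ hc₂) (sub_nonneg.2 hεt)]
    have h2 : c₁ * c₂ * (ε * t) * (ε ^ 2 * t ^ 2 * ‖M‖) ≤ c₁ * c₂ * (ε ^ 2 * t ^ 2 * ‖M‖) :=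
      mul_le_mul_of_nonneg_right h1 (by positivity)
    nlinarith [h2, mul_nonneg (mul_nonneg (sq_nonneg ε) (sq_nonneg t)) (norm_nonneg M),
      mul_nonneg (sq_nonneg ε) (norm_nonneg M),
      mul_nonneg hc₁ (mul_nonneg (mul_nonneg (sq_nonneg ε) (sq_nonneg t)) (norm_nonneg M)),
      mul_nonneg hc₂ (mul_nonneg (sq_nonneg ε) (norm_nonneg M)),
      mul_nonneg hc₁ (mul_nonneg (sq_nonneg ε) (norm_nonneg M)),
      mul_nonneg hc₂ (mul_nonneg (mul_nonneg (sq_nonneg ε) (sq_nonneg t)) (norm_nonneg M)),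
      mul_nonneg (mul_nonneg hc₁ hc₁) (mul_nonneg (sq_nonneg ε) (norm_nonneg M)),
      mul_nonneg (mul_nonneg hc₁ hc₂) (mul_nonneg (sq_nonneg ε) (norm_nonneg M))]
  · have h1 : ‖e t‖ ≤ ‖m t - M‖ + ε * ‖m₁ t‖ := by
      have := norm_sub_le (m t - M) (ε • m₁ t)
      rw [norm_smul, Real.norm_eq_abs, abs_of_pos hε] at this
      exact this
    have h2 : ‖m t - M‖ ≤ 2 * ‖M‖ := by
      have := norm_sub_le (m t) M
      rw [hmconst t] at this
      linarith
    have h3 := hm1bound t ht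
    have h4 : (1 : ℝ) ≤ ε * t := hεt.le
    have h5 : ‖e t‖ ≤ 2 * ‖M‖ + ε * ((c₁ * t + c₂ * ε * t ^ 2) * ‖M‖) := by
      have := mul_le_mul_of_nonneg_left h3 hε.le
      linarith
    refine le_trans h5 ?_
    have hsq : (1 : ℝ) ≤ (ε * t) * (ε * t) := by nlinarith
    nlinarith [mul_le_mul_of_nonneg_left hsq (norm_nonneg M),
      mul_nonneg (mul_nonneg (mul_nonneg hc₁ (mul_nonneg hε.le ht)) (sub_nonneg.2 h4)) (norm_nonneg M),
      mul_nonneg (mul_nonneg hc₁ hc₁) (mul_nonneg (sq_nonneg ε) (norm_nonneg M)),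
      mul_nonneg (mul_nonneg hc₁ hc₂) (mul_nonneg (sq_nonneg ε) (norm_nonneg M)),
      mul_nonneg hc₁ (mul_nonneg (sq_nonneg ε) (norm_nonneg M)),
      mul_nonneg hc₂ (mul_nonneg (sq_nonneg ε) (norm_nonneg M)),
      mul_nonneg (sq_nonneg ε) (norm_nonneg M),
      mul_nonneg (mul_nonneg hc₁ hc₁) (mul_nonneg (mul_nonneg (sq_nonneg ε) (sq_nonneg t)) (norm_nonneg M)),
      mul_nonneg (mul_nonneg hc₁ hc₂) (mul_nonneg (mul_nonneg (sq_nonneg ε) (sq_nonneg t)) (norm_nonneg M)),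
      mul_nonneg hc₁ (mul_nonneg (mul_nonneg (sq_nonneg ε) (sq_nonneg t)) (norm_nonneg M)),
      mul_nonneg hc₂ (mul_nonneg (mul_nonneg (sq_nonneg ε) (sq_nonneg t)) (norm_nonneg M)),
      mul_nonneg (mul_nonneg (sq_nonneg ε) (sq_nonneg t)) (norm_nonneg M)]
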